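/- arXiv:1411.0505 — 2 statements merged into one kernel-verified Lean document; each statement's English description precedes it below -/
import Mathlib

section
/- Assume the set of Matchings generated by D₁ and D₂ is infinite. Then the closure of E equals K₁+K₂, where E = { Σ_{k=1}^{∞} c_k β^{-k} : (c_k)_{k≥1} is an infinite concatenation of Matchings }. -/
open Finset Pointwise

/-- The block `(0,…,0, β^k * a)` of length `k` associated to the similitude
`x ↦ x/β^k + a`. -/
noncomputable def digitBlock (β : ℝ) (k : ℕ) (a : ℝ) : List ℝ :=
  List.replicate (k - 1) 0 ++ [β ^ k * a]

/-- `w` is a Matching generated by the digital sets `P` and `Q`: it is the coordinatewise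
sum of a concatenation of blocks from `P` and a concatenation of blocks from `Q`
having the same total length as `w`. -/
def IsMatching {n m : ℕ} (P : Fin n → List ℝ) (Q : Fin m → List ℝ) (w : List ℝ) : Prop :=
  ∃ (is : List (Fin n)) (js : List (Fin m)),
    is ≠ [] ∧ js ≠ [] ∧
    (is.map P).flatten.length = w.length ∧
    (js.map Q).flatten.length = w.length ∧
    w = List.zipWith (· + ·) (is.map P).flatten (js.map Q).flatten

/-- A Matching is primitive if it is not a concatenation of two or more shorter Matchings. -/
def IsPrimMatching {n m : ℕ} (P : Fin n → List ℝ) (Q : Fin m → List ℝ) (w : List ℝ) : Prop :=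
  IsMatching P Q w ∧
    ¬ ∃ u v : List ℝ, u ≠ [] ∧ v ≠ [] ∧ IsMatching P Q u ∧ IsMatching P Q v ∧ w = u ++ v

/-- The value `Σ_{i=1}^{L} c_i β^{-i}` of the block `w = (c_1,…,c_L)` in base `β`. -/
noncomputable def blockVal (β : ℝ) (w : List ℝ) : ℝ :=
  ∑ i : Fin w.length, w.get i / β ^ (i.1 + 1)

/-- The similitude `φ_w(x) = x/β^{|w|} + Σ_i c_i β^{-i}` associated to a block `w`. -/
noncomputable def phiBlock (β : ℝ) (w : List ℝ) (x : ℝ) : ℝ :=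
  x / β ^ w.length + blockVal β w

/-- `x : ℕ → ℝ` (indexed from 0, representing `(x_k)_{k ≥ 1}`) is the infinite
concatenation of the nonempty blocks `W 0, W 1, …`. -/
def IsConcatSeq (W : ℕ → List ℝ) (x : ℕ → ℝ) : Prop :=
  (∀ t, W t ≠ []) ∧
    ∀ (t : ℕ) (i : Fin (W t).length),
      x ((∑ s ∈ Finset.range t, (W s).length) + i) = (W t).get i

/-- `x` is an infinite concatenation of blocks from the family `Ws`. -/
def IsInfConcatFrom (Ws : Set (List ℝ)) (x : ℕ → ℝ) : Prop :=
  ∃ W : ℕ → List ℝ, (∀ t, W t ∈ Ws) ∧ IsConcatSeq W x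

/-- The value `Σ_{k=1}^{∞} x_k β^{-k}` of a sequence (indexed from 0). -/
noncomputable def seqVal (β : ℝ) (x : ℕ → ℝ) : ℝ :=
  ∑' k : ℕ, x k / β ^ (k + 1)

/-- The set `E` of values of infinite concatenations of Matchings. -/
def Eset {n m : ℕ} (β : ℝ) (P : Fin n → List ℝ) (Q : Fin m → List ℝ) : Set ℝ :=
  {z | ∃ x : ℕ → ℝ, IsInfConcatFrom {w | IsMatching P Q w} x ∧ z = seqVal β x}

/-- `a` is a coding: the coordinatewise sum of an infinite concatenation of blocks from
`P` and an infinite concatenation of blocks from `Q`. -/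
def IsCoding {n m : ℕ} (P : Fin n → List ℝ) (Q : Fin m → List ℝ) (a : ℕ → ℝ) : Prop :=
  ∃ x y : ℕ → ℝ, IsInfConcatFrom (Set.range P) x ∧ IsInfConcatFrom (Set.range Q) y ∧
    ∀ k, a k = x k + y k

/-- The set `C` of codings having a tail containing no segment that is a Matching. -/
def Cset {n m : ℕ} (P : Fin n → List ℝ) (Q : Fin m → List ℝ) : Set (ℕ → ℝ) :=
  {a | IsCoding P Q a ∧
    ∃ N : ℕ, ∀ j ≥ N, ∀ l : ℕ, 1 ≤ l →
      ¬ IsMatching P Q (List.ofFn fun i : Fin l => a (j + i))}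

/-!
Write `φ_w x = x / β^{|w|} + Σ_i w_i β^{-i}`, so that `φ_{u ++ v} = φ_u ∘ φ_v`, the maps of the
two IFS are `φ_{P_i}` and `φ_{Q_j}`, and `φ_{u + v} (x + y) = φ_u x + φ_v y` when `|u| = |v|`.
A sequence with prefix `w` has value `φ_w s` with `|s|` bounded, so its value is within
`O(β^{-|w|})` of every `φ_w c`.

If `x` is a concatenation of Matchings, each prefix of it that is a union of whole Matchings
has the form `w = u + v` with `u`, `v` concatenations of blocks of `P` and `Q`, and
`φ_w (c₁ + c₂) = φ_u c₁ + φ_v c₂ ∈ K₁ + K₂`; these points converge to the value of `x`.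

Conversely, write `p = φ_u p'` and `q = φ_v q'` with codes `u`, `v` longer than `t`. The
blocks `u^{|v|}` and `v^{|u|}` have the same length, so their sum `w` is a Matching, and the
value of the periodic sequence `w w w ⋯` is within `O(β^{-t})` of `φ_{u^{|v|}} p' + φ_{v^{|u|}} q'`,
which is within `O(β^{-t})` of `p + q` since both terms lie in `φ_u K₁` and `φ_v K₂`.
-/

theorem blockVal_eq_sum_range (β : ℝ) (w : List ℝ) :
    blockVal β w = ∑ k ∈ range w.length, w.getD k 0 / β ^ (k + 1) := by
  simp [blockVal, Finset.sum_range]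

theorem blockVal_append (β : ℝ) (u v : List ℝ) :
    blockVal β (u ++ v) = blockVal β u + blockVal β v / β ^ u.length := by
  simp only [blockVal_eq_sum_range, List.length_append, sum_range_add, sum_div, div_div,
    ← pow_add]
  congr 1
  · refine sum_congr rfl fun k hk => ?_
    rw [List.getD_append _ _ _ _ (mem_range.1 hk)]
  · refine sum_congr rfl fun k _ => ?_
    rw [List.getD_append_right _ _ _ _ (by omega), Nat.add_sub_cancel_left]
    ring_nf

theorem blockVal_zipWith_add (β : ℝ) {u v : List ℝ} (h : u.length = v.length) :
    blockVal β (List.zipWith (· + ·) u v) = blockVal β u + blockVal β v := by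
  simp only [blockVal_eq_sum_range, List.length_zipWith, h, min_self, ← sum_add_distrib]
  refine sum_congr rfl fun k hk => ?_
  have hk : k < v.length := mem_range.1 hk
  rw [List.getD_eq_getElem _ _ (by simpa [h]), List.getElem_zipWith,
    List.getD_eq_getElem _ _ (h ▸ hk), List.getD_eq_getElem _ _ hk, add_div]

theorem phiBlock_nil (β x : ℝ) : phiBlock β [] x = x := by
  simp [phiBlock, blockVal]

theorem phiBlock_append (β : ℝ) (u v : List ℝ) (x : ℝ) :
    phiBlock β (u ++ v) x = phiBlock β u (phiBlock β v x) := by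
  simp only [phiBlock, blockVal_append, List.length_append, pow_add]
  ring

theorem phiBlock_zipWith_add (β : ℝ) {u v : List ℝ} (h : u.length = v.length) (x y : ℝ) :
    phiBlock β (List.zipWith (· + ·) u v) (x + y) = phiBlock β u x + phiBlock β v y := by
  simp only [phiBlock, blockVal_zipWith_add β h, List.length_zipWith, h, min_self]
  ring

theorem abs_phiBlock_sub_phiBlock (β : ℝ) (w : List ℝ) (x y : ℝ) :
    |phiBlock β w x - phiBlock β w y| = |x - y| / |β| ^ w.length := by
  simp only [phiBlock, add_sub_add_right_eq_sub, ← sub_div, abs_div, abs_pow]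

theorem phiBlock_digitBlock {β : ℝ} (hβ : β ≠ 0) {k : ℕ} (hk : 0 < k) (c x : ℝ) :
    phiBlock β (digitBlock β k c) x = x / β ^ k + c := by
  have hzero : blockVal β (List.replicate (k - 1) 0) = 0 := by simp [blockVal]
  have hlast : blockVal β [β ^ k * c] = β ^ k * c / β := by simp [blockVal]
  have hlen : (List.replicate (k - 1) (0 : ℝ)).length + 1 = k := by simp; omega
  rw [phiBlock, digitBlock, blockVal_append, hzero, hlast, div_div, ← pow_succ',
    List.length_append, List.length_singleton, hlen]
  field_simp
  ring

section Series

variable {β : ℝ} {x : ℕ → ℝ} {M : ℝ}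

theorem hasSum_div_pow_succ (hβ : 1 < β) (M : ℝ) :
    HasSum (fun k : ℕ => M / β ^ (k + 1)) (M / (β - 1)) := by
  have hβ0 : β ≠ 0 := by positivity
  have hβ1 : β - 1 ≠ 0 := by linarith
  have hgeom := (hasSum_geometric_of_lt_one (inv_nonneg.2 (zero_le_one.trans hβ.le))
    (inv_lt_one_of_one_lt₀ hβ)).mul_left (M / β)
  have hterm : (fun k : ℕ => M / β ^ (k + 1)) = fun k => M / β * β⁻¹ ^ k := by
    funext k
    rw [pow_succ, inv_pow]
    field_simp
  have hval : M / (β - 1) = M / β * (1 - β⁻¹)⁻¹ := by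
    rw [show 1 - β⁻¹ = (β - 1) / β by field_simp, inv_div]
    field_simp
  rwa [hterm, hval]

theorem norm_div_pow_succ_le (hβ : 1 < β) (hx : ∀ k, |x k| ≤ M) (k : ℕ) :
    ‖x k / β ^ (k + 1)‖ ≤ M / β ^ (k + 1) := by
  have hpos : (0 : ℝ) < β ^ (k + 1) := pow_pos (zero_lt_one.trans hβ) _
  rw [Real.norm_eq_abs, abs_div, abs_of_pos hpos]
  exact div_le_div_of_nonneg_right (hx k) hpos.le

theorem summable_seqVal (hβ : 1 < β) (hx : ∀ k, |x k| ≤ M) :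
    Summable fun k => x k / β ^ (k + 1) :=
  (hasSum_div_pow_succ hβ M).summable.of_norm_bounded (norm_div_pow_succ_le hβ hx)

theorem abs_seqVal_le (hβ : 1 < β) (hx : ∀ k, |x k| ≤ M) : |seqVal β x| ≤ M / (β - 1) :=
  tsum_of_norm_bounded (hasSum_div_pow_succ hβ M) (norm_div_pow_succ_le hβ hx)

theorem seqVal_eq_phiBlock (hβ : 1 < β) (hx : ∀ k, |x k| ≤ M) {w : List ℝ}
    (hw : ∀ k (hk : k < w.length), x k = w[k]) :
    seqVal β x = phiBlock β w (seqVal β fun k => x (k + w.length)) := by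
  rw [seqVal, ← (summable_seqVal hβ hx).sum_add_tsum_nat_add w.length, phiBlock, seqVal,
    ← tsum_div_const, blockVal, add_comm, Finset.sum_range]
  congr 1
  · refine tsum_congr fun k => ?_
    rw [div_div, ← pow_add]
    ring_nf
  · exact Finset.sum_congr rfl fun k _ => by rw [hw k k.2, List.get_eq_getElem]

theorem abs_seqVal_sub_phiBlock_le (hβ : 1 < β) (hx : ∀ k, |x k| ≤ M) {w : List ℝ}
    (hw : ∀ k (hk : k < w.length), x k = w[k]) (c : ℝ) :
    |seqVal β x - phiBlock β w c| ≤ (M / (β - 1) + |c|) / β ^ w.length := by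
  rw [seqVal_eq_phiBlock hβ hx hw, abs_phiBlock_sub_phiBlock, abs_of_pos (by linarith : 0 < β)]
  gcongr
  exact (abs_sub _ _).trans (add_le_add_left (abs_seqVal_le hβ fun k => hx _) _)

end Series

theorem length_flatten_replicate {α : Type*} (k : ℕ) (l : List α) :
    (List.replicate k l).flatten.length = k * l.length := by
  simp [List.length_flatten, List.sum_replicate]

theorem flatten_replicate_ne_nil {α : Type*} {k : ℕ} {l : List α} (hk : k ≠ 0) (hl : l ≠ []) :
    (List.replicate k l).flatten ≠ [] := by
  obtain ⟨k, rfl⟩ := Nat.exists_eq_succ_of_ne_zero hk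
  simp [List.replicate_succ, hl]

theorem flatten_map_flatten_replicate {ι α : Type*} (P : ι → List α) (k : ℕ) (is : List ι) :
    (((List.replicate k is).flatten).map P).flatten
      = (List.replicate k (is.map P).flatten).flatten := by
  simp [List.map_flatten, List.map_replicate, List.flatten_flatten]

theorem abs_le_of_mem_flatten_map {ι : Type*} {P : ι → List ℝ} {M : ℝ}
    (hP : ∀ i, ∀ d ∈ P i, |d| ≤ M) {is : List ι} {d : ℝ} (hd : d ∈ (is.map P).flatten) :
    |d| ≤ M := by
  obtain ⟨_, hl, hd⟩ := List.mem_flatten.1 hd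
  obtain ⟨i, -, rfl⟩ := List.mem_map.1 hl
  exact hP i d hd

section Concatenation

variable {W : ℕ → List ℝ} {x : ℕ → ℝ}

theorem length_flatten_map_range (W : ℕ → List ℝ) (t : ℕ) :
    ((List.range t).map W).flatten.length = ∑ s ∈ range t, (W s).length := by
  induction t with
  | zero => simp
  | succ t ih => simp [List.range_succ, ih, sum_range_succ]

theorem IsConcatSeq.eq_getElem_flatten (hx : IsConcatSeq W x) (t : ℕ) :
    ∀ k (hk : k < ((List.range t).map W).flatten.length),
      x k = ((List.range t).map W).flatten[k] := by
  induction t with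
  | zero => simp
  | succ t ih =>
    intro k hk
    simp only [List.range_succ, List.map_append, List.map_singleton, List.flatten_append,
      List.flatten_singleton, List.length_append] at hk ⊢
    rw [List.getElem_append]
    split_ifs with h
    · exact ih k h
    · have hkt : k - ((List.range t).map W).flatten.length < (W t).length := by omega
      have hkx := hx.2 t ⟨_, hkt⟩
      rw [← length_flatten_map_range, Nat.add_sub_cancel' (by omega)] at hkx
      exact hkx

theorem IsConcatSeq.le_length_flatten (hx : IsConcatSeq W x) (t : ℕ) :
    t ≤ ((List.range t).map W).flatten.length := by
  induction t with
  | zero => simp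
  | succ t ih =>
    have := List.length_pos_iff.2 (hx.1 t)
    simp only [List.range_succ, List.map_append, List.map_singleton, List.flatten_append,
      List.flatten_singleton, List.length_append]
    omega

theorem IsConcatSeq.abs_le (hx : IsConcatSeq W x) {M : ℝ} (hW : ∀ t, ∀ d ∈ W t, |d| ≤ M)
    (k : ℕ) : |x k| ≤ M := by
  have hk : k < ((List.range (k + 1)).map W).flatten.length :=
    (hx.le_length_flatten (k + 1)).trans_lt' k.lt_succ_self
  obtain ⟨_, hl, hd⟩ := List.mem_flatten.1 (List.getElem_mem hk)
  obtain ⟨s, -, rfl⟩ := List.mem_map.1 hl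
  exact hx.eq_getElem_flatten _ k hk ▸ hW s _ hd

theorem isConcatSeq_periodic {w : List ℝ} (hw : w ≠ []) :
    IsConcatSeq (fun _ => w) fun k => w[k % w.length]'(Nat.mod_lt _ (List.length_pos_iff.2 hw)) :=
  ⟨fun _ => hw, fun t i => by simp [Nat.mul_comm t, Nat.mod_eq_of_lt i.2]⟩

end Concatenation

section Matching

variable {n m : ℕ} {P : Fin n → List ℝ} {Q : Fin m → List ℝ}

theorem IsMatching.append {u v : List ℝ} (hu : IsMatching P Q u) (hv : IsMatching P Q v) :
    IsMatching P Q (u ++ v) := by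
  obtain ⟨is, js, his, hjs, hP, hQ, rfl⟩ := hu
  obtain ⟨is', js', -, -, hP', hQ', rfl⟩ := hv
  have hzip := List.zipWith_append (f := (· + ·)) (hP.trans hQ.symm)
    (l₁' := (is'.map P).flatten) (l₂' := (js'.map Q).flatten)
  refine ⟨is ++ is', js ++ js', by simp [his], by simp [hjs], ?_, ?_, ?_⟩ <;>
    simp only [List.map_append, List.flatten_append, List.length_append, hzip]
  · rw [← hP, ← hP']
  · rw [← hQ, ← hQ']

theorem isMatching_flatten_range {W : ℕ → List ℝ} (hW : ∀ t, IsMatching P Q (W t)) (t : ℕ) :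
    IsMatching P Q ((List.range (t + 1)).map W).flatten := by
  induction t with
  | zero => simpa using hW 0
  | succ t ih =>
    rw [List.range_succ, List.map_append, List.flatten_append]
    simpa using ih.append (hW (t + 1))

theorem IsMatching.abs_le {w : List ℝ} (hw : IsMatching P Q w) {M₁ M₂ : ℝ}
    (hP : ∀ i, ∀ d ∈ P i, |d| ≤ M₁) (hQ : ∀ j, ∀ d ∈ Q j, |d| ≤ M₂) :
    ∀ d ∈ w, |d| ≤ M₁ + M₂ := by
  obtain ⟨is, js, -, -, -, -, rfl⟩ := hw
  intro d hd
  obtain ⟨k, hk, rfl⟩ := List.mem_iff_getElem.1 hd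
  rw [List.getElem_zipWith]
  exact (abs_add_le _ _).trans (add_le_add (abs_le_of_mem_flatten_map hP (List.getElem_mem _))
    (abs_le_of_mem_flatten_map hQ (List.getElem_mem _)))

theorem isMatching_zipWith_replicate {is : List (Fin n)} {js : List (Fin m)}
    (hu : (is.map P).flatten ≠ []) (hv : (js.map Q).flatten ≠ []) :
    IsMatching P Q (List.zipWith (· + ·)
      (List.replicate (js.map Q).flatten.length (is.map P).flatten).flatten
      (List.replicate (is.map P).flatten.length (js.map Q).flatten).flatten) := by
  have hlen : ((List.replicate (js.map Q).flatten.length (is.map P).flatten).flatten).length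
      = ((List.replicate (is.map P).flatten.length (js.map Q).flatten).flatten).length := by
    rw [length_flatten_replicate, length_flatten_replicate, Nat.mul_comm]
  refine ⟨(List.replicate (js.map Q).flatten.length is).flatten,
    (List.replicate (is.map P).flatten.length js).flatten, ?_, ?_, ?_, ?_, ?_⟩
  · exact flatten_replicate_ne_nil (List.length_pos_iff.2 hv).ne' fun h => hu (by simp [h])
  · exact flatten_replicate_ne_nil (List.length_pos_iff.2 hu).ne' fun h => hv (by simp [h])
  all_goals simp only [flatten_map_flatten_replicate, List.length_zipWith, hlen, min_self]

end Matching

theorem mapsTo_of_eq_iUnion_image {ι α : Type*} {f : ι → α → α} {K : Set α}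
    (hK : K = ⋃ i, f i '' K) (i : ι) : Set.MapsTo (f i) K K := fun x hx =>
  hK.symm ▸ Set.mem_iUnion.2 ⟨i, x, hx, rfl⟩

section SelfSimilar

variable {ι : Type*} {β : ℝ} {P : ι → List ℝ} {K : Set ℝ}

theorem mapsTo_phiBlock_flatten (hK : ∀ i, Set.MapsTo (phiBlock β (P i)) K K) (is : List ι) :
    Set.MapsTo (phiBlock β (is.map P).flatten) K K := by
  induction is with
  | nil => exact fun x hx => by simpa [phiBlock_nil] using hx
  | cons i is ih =>
    intro x hx
    rw [List.map_cons, List.flatten_cons, phiBlock_append]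
    exact hK i (ih hx)

theorem exists_eq_phiBlock_flatten (hK : K ⊆ ⋃ i, phiBlock β (P i) '' K) {p : ℝ} (hp : p ∈ K)
    (t : ℕ) : ∃ is : List ι, is.length = t ∧ ∃ p' ∈ K, p = phiBlock β (is.map P).flatten p' := by
  induction t with
  | zero => exact ⟨[], rfl, p, hp, (phiBlock_nil β p).symm⟩
  | succ t ih =>
    obtain ⟨is, rfl, p', hp', rfl⟩ := ih
    obtain ⟨i, p'', hp'', rfl⟩ := Set.mem_iUnion.1 (hK hp')
    refine ⟨is ++ [i], by simp, p'', hp'', ?_⟩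
    simp [phiBlock_append]

theorem length_le_length_flatten_map (hP : ∀ i, P i ≠ []) (is : List ι) :
    is.length ≤ (is.map P).flatten.length := by
  induction is with
  | nil => simp
  | cons i is ih =>
    have := List.length_pos_iff.2 (hP i)
    simp only [List.map_cons, List.flatten_cons, List.length_append, List.length_cons]
    omega

theorem exists_abs_le_of_finite [Finite ι] (P : ι → List ℝ) : ∃ M, ∀ i, ∀ d ∈ P i, |d| ≤ M := by
  obtain ⟨M, hM⟩ := ((Set.finite_iUnion fun i => (P i).finite_toSet).image abs).bddAbove
  exact ⟨M, fun i d hd => hM ⟨d, Set.mem_iUnion.2 ⟨i, hd⟩, rfl⟩⟩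

theorem abs_phiBlock_sub_phiBlock_flatten_replicate_le (hβ : 0 < β)
    (hK : ∀ i, Set.MapsTo (phiBlock β (P i)) K K) {B : ℝ} (hB : ∀ x ∈ K, |x| ≤ B)
    (is : List ι) {k : ℕ} (hk : k ≠ 0) {p : ℝ} (hp : p ∈ K) :
    |phiBlock β (is.map P).flatten p - phiBlock β (List.replicate k (is.map P).flatten).flatten p|
      ≤ 2 * B / β ^ (is.map P).flatten.length := by
  obtain ⟨k, rfl⟩ := Nat.exists_eq_succ_of_ne_zero hk
  have hmem : phiBlock β (List.replicate k (is.map P).flatten).flatten p ∈ K := by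
    rw [← flatten_map_flatten_replicate]
    exact mapsTo_phiBlock_flatten hK _ hp
  rw [List.replicate_succ, List.flatten_cons, phiBlock_append, abs_phiBlock_sub_phiBlock,
    abs_of_pos hβ]
  gcongr
  linarith [abs_sub (p) (phiBlock β (List.replicate k (is.map P).flatten).flatten p), hB _ hp,
    hB _ hmem]

end SelfSimilar

theorem mem_closure_of_forall_abs_sub_le_div_pow {β : ℝ} (hβ : 1 < β) {S : Set ℝ} {z C : ℝ}
    (h : ∀ t : ℕ, ∃ y ∈ S, |z - y| ≤ C / β ^ t) : z ∈ closure S := by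
  refine Metric.mem_closure_iff.2 fun ε hε => ?_
  have hlim : Filter.Tendsto (fun t : ℕ => C / β ^ t) Filter.atTop (nhds 0) :=
    tendsto_const_nhds.div_atTop (tendsto_pow_atTop_atTop_of_one_lt hβ)
  obtain ⟨t, ht⟩ := (hlim.eventually (gt_mem_nhds hε)).exists
  obtain ⟨y, hy, hzy⟩ := h t
  exact ⟨y, hy, (Real.dist_eq z y).trans_le hzy |>.trans_lt ht⟩

section SumSet

variable {n m : ℕ} {β : ℝ} {P : Fin n → List ℝ} {Q : Fin m → List ℝ} {K₁ K₂ : Set ℝ}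

theorem Eset_subset_closure_add (hβ : 1 < β) (hK₁ : ∀ i, Set.MapsTo (phiBlock β (P i)) K₁ K₁)
    (hK₂ : ∀ j, Set.MapsTo (phiBlock β (Q j)) K₂ K₂) (hK₁ne : K₁.Nonempty) (hK₂ne : K₂.Nonempty) :
    Eset β P Q ⊆ closure (K₁ + K₂) := by
  rintro _ ⟨x, ⟨W, hWm, hx⟩, rfl⟩
  obtain ⟨c₁, hc₁⟩ := hK₁ne
  obtain ⟨c₂, hc₂⟩ := hK₂ne
  obtain ⟨M₁, hM₁⟩ := exists_abs_le_of_finite P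
  obtain ⟨M₂, hM₂⟩ := exists_abs_le_of_finite Q
  have hxM : ∀ k, |x k| ≤ M₁ + M₂ := hx.abs_le fun t => (hWm t).abs_le hM₁ hM₂
  refine mem_closure_of_forall_abs_sub_le_div_pow hβ
    (C := (M₁ + M₂) / (β - 1) + |c₁ + c₂|) fun t => ?_
  obtain ⟨is, js, -, -, hPlen, hQlen, hw⟩ := isMatching_flatten_range hWm t
  refine ⟨phiBlock β ((List.range (t + 1)).map W).flatten (c₁ + c₂), ?_, ?_⟩
  · rw [hw, phiBlock_zipWith_add β (hPlen.trans hQlen.symm)]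
    exact Set.add_mem_add (mapsTo_phiBlock_flatten hK₁ is hc₁) (mapsTo_phiBlock_flatten hK₂ js hc₂)
  · refine (abs_seqVal_sub_phiBlock_le hβ hxM (hx.eq_getElem_flatten (t + 1)) _).trans ?_
    have hM : 0 ≤ M₁ + M₂ := (abs_nonneg (x 0)).trans (hxM 0)
    have hβ1 : 0 < β - 1 := by linarith
    gcongr
    · exact hβ.le
    · exact t.le_succ.trans (hx.le_length_flatten (t + 1))

theorem exists_mem_Eset_abs_sub_phiBlock_le (hβ : 1 < β) {M₁ M₂ : ℝ}
    (hM₁ : ∀ i, ∀ d ∈ P i, |d| ≤ M₁) (hM₂ : ∀ j, ∀ d ∈ Q j, |d| ≤ M₂) {w : List ℝ}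
    (hw : IsMatching P Q w) (hwne : w ≠ []) (c : ℝ) :
    ∃ z ∈ Eset β P Q, |z - phiBlock β w c| ≤ ((M₁ + M₂) / (β - 1) + |c|) / β ^ w.length := by
  set x : ℕ → ℝ := fun k => w[k % w.length]'(Nat.mod_lt _ (List.length_pos_iff.2 hwne))
  refine ⟨seqVal β x, ⟨x, ⟨fun _ => w, fun _ => hw, isConcatSeq_periodic hwne⟩, rfl⟩, ?_⟩
  exact abs_seqVal_sub_phiBlock_le hβ (fun k => hw.abs_le hM₁ hM₂ _ (List.getElem_mem _))
    (fun k hk => by simp [Nat.mod_eq_of_lt hk]) c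

theorem exists_mem_Eset_abs_sub_le (hβ : 1 < β) (hK₁ : ∀ i, Set.MapsTo (phiBlock β (P i)) K₁ K₁)
    (hK₂ : ∀ j, Set.MapsTo (phiBlock β (Q j)) K₂ K₂) {B₁ B₂ M₁ M₂ : ℝ}
    (hB₁ : ∀ x ∈ K₁, |x| ≤ B₁) (hB₂ : ∀ x ∈ K₂, |x| ≤ B₂)
    (hM₁ : ∀ i, ∀ d ∈ P i, |d| ≤ M₁) (hM₂ : ∀ j, ∀ d ∈ Q j, |d| ≤ M₂)
    {is : List (Fin n)} {js : List (Fin m)} {t : ℕ}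
    (hu : t < (is.map P).flatten.length) (hv : t < (js.map Q).flatten.length)
    {p q : ℝ} (hp : p ∈ K₁) (hq : q ∈ K₂) :
    ∃ z ∈ Eset β P Q, |phiBlock β (is.map P).flatten p + phiBlock β (js.map Q).flatten q - z|
      ≤ ((M₁ + M₂) / (β - 1) + 3 * (B₁ + B₂)) / β ^ t := by
  set u := (is.map P).flatten
  set v := (js.map Q).flatten
  have hune : u ≠ [] := List.ne_nil_of_length_pos (by omega)
  have hvne : v ≠ [] := List.ne_nil_of_length_pos (by omega)
  set u' := (List.replicate v.length u).flatten
  set v' := (List.replicate u.length v).flatten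
  have hlen : u'.length = v'.length := by
    rw [length_flatten_replicate, length_flatten_replicate, Nat.mul_comm]
  have hwlen : t < (List.zipWith (· + ·) u' v').length := by
    rw [List.length_zipWith, ← hlen, min_self, length_flatten_replicate]
    exact hu.trans_le (Nat.le_mul_of_pos_left _ (List.length_pos_iff.2 hvne))
  have hw := isMatching_zipWith_replicate hune hvne
  have hwne : List.zipWith (· + ·) u' v' ≠ [] := List.ne_nil_of_length_pos (by omega)
  obtain ⟨z, hz, hzw⟩ := exists_mem_Eset_abs_sub_phiBlock_le hβ hM₁ hM₂ hw hwne (p + q)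
  refine ⟨z, hz, ?_⟩
  have hβ0 : 0 < β := zero_lt_one.trans hβ
  have hβt : ∀ {l : ℕ}, t ≤ l → β ^ t ≤ β ^ l := fun h => pow_le_pow_right₀ hβ.le h
  have hB₁0 : 0 ≤ B₁ := (abs_nonneg p).trans (hB₁ p hp)
  have hB₂0 : 0 ≤ B₂ := (abs_nonneg q).trans (hB₂ q hq)
  have hM0 : 0 ≤ (M₁ + M₂) / (β - 1) :=
    div_nonneg ((abs_nonneg _).trans (hw.abs_le hM₁ hM₂ _ (List.head_mem hwne))) (by linarith)
  have hzw' : |z - phiBlock β u' p - phiBlock β v' q|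
      ≤ ((M₁ + M₂) / (β - 1) + (B₁ + B₂)) / β ^ t := by
    rw [sub_sub, ← phiBlock_zipWith_add β hlen]
    refine hzw.trans (div_le_div₀ (by positivity) ?_ (by positivity) (hβt hwlen.le))
    exact add_le_add_right ((abs_add_le p q).trans (add_le_add (hB₁ p hp) (hB₂ q hq))) _
  have hpu := (abs_phiBlock_sub_phiBlock_flatten_replicate_le hβ0 hK₁ hB₁ is
    (List.length_pos_iff.2 hvne).ne' hp).trans
    (div_le_div_of_nonneg_left (by positivity) (by positivity) (hβt hu.le))
  have hqv := (abs_phiBlock_sub_phiBlock_flatten_replicate_le hβ0 hK₂ hB₂ js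
    (List.length_pos_iff.2 hune).ne' hq).trans
    (div_le_div_of_nonneg_left (by positivity) (by positivity) (hβt hv.le))
  have hsplit : ((M₁ + M₂) / (β - 1) + 3 * (B₁ + B₂)) / β ^ t
      = 2 * B₁ / β ^ t + 2 * B₂ / β ^ t + ((M₁ + M₂) / (β - 1) + (B₁ + B₂)) / β ^ t := by ring
  rw [hsplit, abs_le]
  rw [abs_le] at hpu hqv hzw'
  constructor <;> linarith [hpu.1, hpu.2, hqv.1, hqv.2, hzw'.1, hzw'.2]

theorem add_subset_closure_Eset (hβ : 1 < β) (hP : ∀ i, P i ≠ []) (hQ : ∀ j, Q j ≠ [])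
    (hK₁ : K₁ = ⋃ i, phiBlock β (P i) '' K₁) (hK₂ : K₂ = ⋃ j, phiBlock β (Q j) '' K₂)
    (hK₁b : Bornology.IsBounded K₁) (hK₂b : Bornology.IsBounded K₂) :
    K₁ + K₂ ⊆ closure (Eset β P Q) := by
  rintro _ ⟨p, hp, q, hq, rfl⟩
  obtain ⟨B₁, hB₁⟩ := hK₁b.exists_norm_le
  obtain ⟨B₂, hB₂⟩ := hK₂b.exists_norm_le
  obtain ⟨M₁, hM₁⟩ := exists_abs_le_of_finite P
  obtain ⟨M₂, hM₂⟩ := exists_abs_le_of_finite Q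
  refine mem_closure_of_forall_abs_sub_le_div_pow hβ
    (C := (M₁ + M₂) / (β - 1) + 3 * (B₁ + B₂)) fun t => ?_
  obtain ⟨is, his, p', hp', rfl⟩ := exists_eq_phiBlock_flatten hK₁.subset hp (t + 1)
  obtain ⟨js, hjs, q', hq', rfl⟩ := exists_eq_phiBlock_flatten hK₂.subset hq (t + 1)
  exact exists_mem_Eset_abs_sub_le hβ (mapsTo_of_eq_iUnion_image hK₁)
    (mapsTo_of_eq_iUnion_image hK₂) (by simpa using hB₁) (by simpa using hB₂)
    hM₁ hM₂ (by have := length_le_length_flatten_map hP is; omega)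
    (by have := length_le_length_flatten_map hQ js; omega) hp' hq'

end SumSet

theorem statement3_general (β : ℝ) (hβ : 1 < β) (n m : ℕ)
    (nv : Fin n → ℕ) (hnv : ∀ i, 0 < nv i) (a : Fin n → ℝ)
    (mv : Fin m → ℕ) (hmv : ∀ j, 0 < mv j) (b : Fin m → ℝ)
    (K₁ K₂ : Set ℝ)
    (hK₁ne : K₁.Nonempty) (hK₁c : IsCompact K₁)
    (hK₁ : K₁ = ⋃ i : Fin n, (fun x => x / β ^ nv i + a i) '' K₁)
    (hK₂ne : K₂.Nonempty) (hK₂c : IsCompact K₂)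
    (hK₂ : K₂ = ⋃ j : Fin m, (fun x => x / β ^ mv j + b j) '' K₂)
    (P : Fin n → List ℝ) (Q : Fin m → List ℝ)
    (hP : P = fun i => digitBlock β (nv i) (a i))
    (hQ : Q = fun j => digitBlock β (mv j) (b j)) :
    closure (Eset β P Q) = K₁ + K₂ := by
  have hβ0 : β ≠ 0 := (zero_lt_one.trans hβ).ne'
  have hφP : ∀ i, phiBlock β (P i) = fun x => x / β ^ nv i + a i := fun i =>
    funext fun x => by rw [hP, phiBlock_digitBlock hβ0 (hnv i)]
  have hφQ : ∀ j, phiBlock β (Q j) = fun x => x / β ^ mv j + b j := fun j =>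
    funext fun x => by rw [hQ, phiBlock_digitBlock hβ0 (hmv j)]
  have hK₁' : K₁ = ⋃ i, phiBlock β (P i) '' K₁ := by simpa only [hφP] using hK₁
  have hK₂' : K₂ = ⋃ j, phiBlock β (Q j) '' K₂ := by simpa only [hφQ] using hK₂
  apply subset_antisymm
  · rw [← (hK₁c.add hK₂c).isClosed.closure_eq]
    exact closure_minimal (Eset_subset_closure_add hβ (mapsTo_of_eq_iUnion_image hK₁')
      (mapsTo_of_eq_iUnion_image hK₂') hK₁ne hK₂ne) isClosed_closure
  · exact add_subset_closure_Eset hβ (by simp [hP, digitBlock]) (by simp [hQ, digitBlock])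
      hK₁' hK₂' hK₁c.isBounded hK₂c.isBounded

/-- if there are infinitely many Matchings, then the closure of the set `E`
of values of infinite concatenations of Matchings equals `K₁+K₂`. -/
theorem statement3 (β : ℝ) (hβ : 1 < β) (n m : ℕ) (hn : 0 < n) (hm : 0 < m)
    (nv : Fin n → ℕ) (hnv : ∀ i, 0 < nv i) (a : Fin n → ℝ)
    (mv : Fin m → ℕ) (hmv : ∀ j, 0 < mv j) (b : Fin m → ℝ)
    (K₁ K₂ : Set ℝ)
    (hK₁ne : K₁.Nonempty) (hK₁c : IsCompact K₁)
    (hK₁ : K₁ = ⋃ i : Fin n, (fun x => x / β ^ nv i + a i) '' K₁)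
    (hK₂ne : K₂.Nonempty) (hK₂c : IsCompact K₂)
    (hK₂ : K₂ = ⋃ j : Fin m, (fun x => x / β ^ mv j + b j) '' K₂)
    (P : Fin n → List ℝ) (Q : Fin m → List ℝ)
    (hP : P = fun i => digitBlock β (nv i) (a i))
    (hQ : Q = fun j => digitBlock β (mv j) (b j))
    (hinf : {w : List ℝ | IsMatching P Q w}.Infinite) :
    closure (Eset β P Q) = K₁ + K₂ :=
  statement3_general β hβ n m nv hnv a mv hmv b K₁ K₂ hK₁ne hK₁c hK₁ hK₂ne hK₂c hK₂ P Q hP hQ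
end

section
/- If D₁ is homogeneous and D₂ is a multiplier set of D₁, then the set D of primitive Matchings generated by D₁ and D₂ is finite. -/
open Finset Pointwise

/-! Every block of `D₁` has length `k` and any `t` blocks of `D₂` have total length divisible
by `k`. So in a Matching built from more than `t` blocks of `D₂`, the first `t` of them end
exactly where a block of `D₁` ends; cutting there splits it into two Matchings. A primitive
Matching thus uses at most `t` blocks of `D₂`, its length is bounded, and there are finitely
many of them. -/

lemma digitBlock_ne_nil (β : ℝ) (k : ℕ) (a : ℝ) : digitBlock β k a ≠ [] := by
  simp [digitBlock]

lemma length_digitBlock (β : ℝ) {k : ℕ} (hk : 0 < k) (a : ℝ) :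
    (digitBlock β k a).length = k := by
  simp only [digitBlock, List.length_append, List.length_replicate, List.length_singleton]
  omega

section FlattenLength

variable {ι α : Type*} (f : ι → List α)

lemma length_flatten_map_eq_mul {k : ℕ} (hf : ∀ i, (f i).length = k) (l : List ι) :
    (l.map f).flatten.length = l.length * k := by
  simp [List.length_flatten, Function.comp_def, hf]

lemma length_flatten_map_le_mul {M : ℕ} (hf : ∀ i, (f i).length ≤ M) (l : List ι) :
    (l.map f).flatten.length ≤ l.length * M := by
  simpa [List.length_flatten, Function.comp_def] using
    List.sum_le_card_nsmul (l.map fun i => (f i).length) M (by simp [hf])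

lemma length_le_length_flatten_map_s6 (hf : ∀ i, f i ≠ []) (l : List ι) :
    l.length ≤ (l.map f).flatten.length := by
  simpa [List.length_flatten, Function.comp_def] using
    List.card_nsmul_le_sum (l.map fun i => (f i).length) 1
      (by simpa [Nat.one_le_iff_ne_zero] using fun i _ => hf i)

end FlattenLength

section Matching

variable {n m : ℕ} {P : Fin n → List ℝ} {Q : Fin m → List ℝ}

def matchingOf (P : Fin n → List ℝ) (Q : Fin m → List ℝ) (is : List (Fin n))
    (js : List (Fin m)) : List ℝ :=
  List.zipWith (· + ·) (is.map P).flatten (js.map Q).flatten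

lemma length_matchingOf {is : List (Fin n)} {js : List (Fin m)}
    (h : (is.map P).flatten.length = (js.map Q).flatten.length) :
    (matchingOf P Q is js).length = (js.map Q).flatten.length := by
  simp [matchingOf, List.length_zipWith, h]

lemma isMatching_matchingOf {is : List (Fin n)} {js : List (Fin m)} (his : is ≠ [])
    (hjs : js ≠ []) (h : (is.map P).flatten.length = (js.map Q).flatten.length) :
    IsMatching P Q (matchingOf P Q is js) :=
  ⟨is, js, his, hjs, by rw [length_matchingOf h, h], (length_matchingOf h).symm, rfl⟩

lemma IsMatching.exists_eq_matchingOf {w : List ℝ} (hw : IsMatching P Q w) :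
    ∃ is js, (is.map P).flatten.length = (js.map Q).flatten.length ∧
      w = matchingOf P Q is js := by
  obtain ⟨is, js, -, -, hX, hY, rfl⟩ := hw
  exact ⟨is, js, hX.trans hY.symm, rfl⟩

lemma matchingOf_append {is₁ is₂ : List (Fin n)} {js₁ js₂ : List (Fin m)}
    (h : (is₁.map P).flatten.length = (js₁.map Q).flatten.length) :
    matchingOf P Q (is₁ ++ is₂) (js₁ ++ js₂) =
      matchingOf P Q is₁ js₁ ++ matchingOf P Q is₂ js₂ := by
  simp only [matchingOf, List.map_append, List.flatten_append]
  exact List.zipWith_append h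

lemma not_isPrimMatching_matchingOf_append (hQ : ∀ j, Q j ≠ [])
    {is₁ is₂ : List (Fin n)} {js₁ js₂ : List (Fin m)}
    (his₁ : is₁ ≠ []) (his₂ : is₂ ≠ []) (hjs₁ : js₁ ≠ []) (hjs₂ : js₂ ≠ [])
    (h₁ : (is₁.map P).flatten.length = (js₁.map Q).flatten.length)
    (h : ((is₁ ++ is₂).map P).flatten.length = ((js₁ ++ js₂).map Q).flatten.length) :
    ¬ IsPrimMatching P Q (matchingOf P Q (is₁ ++ is₂) (js₁ ++ js₂)) := by
  have h₂ : (is₂.map P).flatten.length = (js₂.map Q).flatten.length := by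
    simp only [List.map_append, List.flatten_append, List.length_append] at h
    omega
  have hne {js : List (Fin m)} (hjs : js ≠ []) : 0 < (js.map Q).flatten.length :=
    lt_of_lt_of_le (List.length_pos_of_ne_nil hjs) (length_le_length_flatten_map_s6 Q hQ js)
  rintro ⟨-, hprim⟩
  refine hprim ⟨_, _, ?_, ?_, isMatching_matchingOf his₁ hjs₁ h₁,
    isMatching_matchingOf his₂ hjs₂ h₂, matchingOf_append h₁⟩
  · exact List.ne_nil_of_length_pos (length_matchingOf h₁ ▸ hne hjs₁)
  · exact List.ne_nil_of_length_pos (length_matchingOf h₂ ▸ hne hjs₂)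

lemma length_flatten_take_eq_sum {l : List (Fin m)} {t : ℕ} (ht : t ≤ l.length) :
    ((l.take t).map Q).flatten.length = ∑ s : Fin t, (Q l[s]).length := by
  rw [← List.sum_ofFn, List.length_flatten, List.map_map]
  congr 1
  refine List.ext_getElem (by simp [ht]) fun _ _ _ => ?_
  simp

theorem IsPrimMatching.exists_length_le {k t : ℕ} (hP : ∀ i, (P i).length = k)
    (hQ : ∀ j, Q j ≠ []) (ht : 0 < t)
    (hmul : ∀ js : Fin t → Fin m, k ∣ ∑ s, (Q (js s)).length) {w : List ℝ}
    (hw : IsPrimMatching P Q w) :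
    ∃ is js, js.length ≤ t ∧ (is.map P).flatten.length = (js.map Q).flatten.length ∧
      w = matchingOf P Q is js := by
  obtain ⟨is, js, hlen, rfl⟩ := hw.1.exists_eq_matchingOf
  refine ⟨is, js, ?_, hlen, rfl⟩
  by_contra! htjs
  obtain ⟨p, hp⟩ : k ∣ ((js.take t).map Q).flatten.length := by
    rw [length_flatten_take_eq_sum htjs.le]
    exact hmul fun s => js[s]
  have hY₁ : 0 < ((js.take t).map Q).flatten.length :=
    lt_of_lt_of_le (by simp; omega) (length_le_length_flatten_map_s6 Q hQ _)
  have hY₂ : 0 < ((js.drop t).map Q).flatten.length :=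
    lt_of_lt_of_le (by simp; omega) (length_le_length_flatten_map_s6 Q hQ _)
  have hY : (js.map Q).flatten.length =
      ((js.take t).map Q).flatten.length + ((js.drop t).map Q).flatten.length := by
    conv_lhs => rw [← List.take_append_drop t js]
    simp only [List.map_append, List.flatten_append, List.length_append]
  rw [length_flatten_map_eq_mul P hP, mul_comm] at hlen
  have hp₀ : 0 < p := Nat.pos_of_ne_zero (by rintro rfl; omega)
  have hpis : p < is.length := Nat.lt_of_mul_lt_mul_left (a := k) (by omega)
  have hsplit := not_isPrimMatching_matchingOf_append hQ (is₁ := is.take p) (is₂ := is.drop p)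
    (js₁ := js.take t) (js₂ := js.drop t)
    (List.ne_nil_of_length_pos (by simp; omega)) (List.ne_nil_of_length_pos (by simp; omega))
    (List.ne_nil_of_length_pos (by simp; omega)) (List.ne_nil_of_length_pos (by simp; omega))
    (by rw [length_flatten_map_eq_mul P hP, List.length_take, min_eq_left hpis.le, hp, mul_comm])
    (by rwa [List.take_append_drop, List.take_append_drop, length_flatten_map_eq_mul P hP,
      mul_comm])
  simp only [List.take_append_drop] at hsplit
  exact hsplit hw

theorem finite_setOf_isPrimMatching {k t : ℕ} (hP : ∀ i, (P i).length = k)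
    (hP₀ : ∀ i, P i ≠ []) (hQ : ∀ j, Q j ≠ []) (ht : 0 < t)
    (hmul : ∀ js : Fin t → Fin m, k ∣ ∑ s, (Q (js s)).length) :
    {w | IsPrimMatching P Q w}.Finite := by
  set M := univ.sup fun j => (Q j).length
  refine (((List.finite_length_le (Fin n) (t * M)).prod (List.finite_length_le (Fin m) t)).image
    fun p => matchingOf P Q p.1 p.2).subset ?_
  intro w hw
  obtain ⟨is, js, hjs, hlen, rfl⟩ := IsPrimMatching.exists_length_le hP hQ ht hmul hw
  refine ⟨(is, js), ⟨?_, hjs⟩, rfl⟩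
  calc is.length ≤ (is.map P).flatten.length := length_le_length_flatten_map_s6 P hP₀ is
    _ = (js.map Q).flatten.length := hlen
    _ ≤ js.length * M :=
      length_flatten_map_le_mul Q (fun j => le_sup (f := fun j => (Q j).length) (mem_univ j)) js
    _ ≤ t * M := Nat.mul_le_mul_right M hjs

end Matching

theorem statement6_general (β : ℝ) (n m : ℕ)
    (nv : Fin n → ℕ) (hnv : ∀ i, 0 < nv i) (a : Fin n → ℝ)
    (mv : Fin m → ℕ) (hmv : ∀ j, 0 < mv j) (b : Fin m → ℝ)
    (P : Fin n → List ℝ) (Q : Fin m → List ℝ)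
    (hP : P = fun i => digitBlock β (nv i) (a i))
    (hQ : Q = fun j => digitBlock β (mv j) (b j))
    (k : ℕ) (hhom : ∀ i, nv i = k)
    (t : ℕ) (ht : 0 < t) (hmul : ∀ js : Fin t → Fin m, k ∣ ∑ s, mv (js s)) :
    {w : List ℝ | IsPrimMatching P Q w}.Finite := by
  subst hP hQ
  refine finite_setOf_isPrimMatching (k := k) (fun i => ?_) (fun i => digitBlock_ne_nil _ _ _)
    (fun j => digitBlock_ne_nil _ _ _) ht ?_
  · rw [length_digitBlock β (hnv i), hhom]
  · simpa only [length_digitBlock β (hmv _)] using hmul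

/-- if `D₁` is homogeneous and `D₂` is a multiplier set of `D₁`, then the set
of primitive Matchings is finite. -/
theorem statement6 (β : ℝ) (hβ : 1 < β) (n m : ℕ) (hn : 0 < n) (hm : 0 < m)
    (nv : Fin n → ℕ) (hnv : ∀ i, 0 < nv i) (a : Fin n → ℝ)
    (mv : Fin m → ℕ) (hmv : ∀ j, 0 < mv j) (b : Fin m → ℝ)
    (P : Fin n → List ℝ) (Q : Fin m → List ℝ)
    (hP : P = fun i => digitBlock β (nv i) (a i))
    (hQ : Q = fun j => digitBlock β (mv j) (b j))
    (k : ℕ) (hhom : ∀ i, nv i = k)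
    (t : ℕ) (ht : 0 < t) (hmul : ∀ js : Fin t → Fin m, k ∣ ∑ s, mv (js s)) :
    {w : List ℝ | IsPrimMatching P Q w}.Finite :=
  statement6_general β n m nv hnv a mv hmv b P Q hP hQ k hhom t ht hmul
end
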